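/- Let w₀ : Ω → (0,∞) be measurable, and let T and T' be finite measurable partitions of Ω such that T' refines T and every cell A of either partition satisfies 0 < ∫_A w₀^{-1} p dμ < ∞ and 0 < ∫_A w₀ q dμ < ∞. Then the partition-optimal balancing loss is nonincreasing under refinement: 2 ∑_{A' ∈ T'} √( (∫_{A'} w₀^{-1} p dμ)·(∫_{A'} w₀ q dμ) ) ≤ 2 ∑_{A ∈ T} √( (∫_A w₀^{-1} p dμ)·(∫_A w₀ q dμ) ). Equivalently, the minimum of the balancing loss over functions of the form w₀·e^f with f piecewise constant on T' is at most the corresponding minimum over f piecewise constant on T. -/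

import Mathlib

/-!
Minimising `∫_A (w₀ e^c)⁻¹ p + ∫_A w₀ e^c q` over the constant `c` on a cell `A` gives
`2 √(a_A b_A)` with `a_A = ∫_A w₀⁻¹ p` and `b_A = ∫_A w₀ q`. When `T'` refines `T`, the numbers
`a_A` and `b_A` of a cell of `T` are the sums of those of the cells of `T'` inside it, so the
comparison of the two sums of square roots is the Cauchy–Schwarz inequality
`∑ √(aᵢ bᵢ) ≤ √(∑ aᵢ · ∑ bᵢ)` on each cell of `T`. The comparison of the infima is immediate:
a function constant on the cells of `T` is constant on the cells of `T'`.
-/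

open MeasureTheory Function

lemma Real.sum_sqrt_mul_le_sqrt_mul_sum {ι : Type*} (s : Finset ι) {a b : ι → ℝ}
    (ha : ∀ i, 0 ≤ a i) (hb : ∀ i, 0 ≤ b i) :
    ∑ i ∈ s, Real.sqrt (a i * b i) ≤ Real.sqrt ((∑ i ∈ s, a i) * ∑ i ∈ s, b i) := by
  rw [Real.sqrt_mul (Finset.sum_nonneg fun i _ => ha i)]
  simpa only [Real.sqrt_mul (ha _)] using Real.sum_sqrt_mul_sqrt_le s ha hb

section Refinement

variable {Ω ι ι' : Type*} {T : ι → Set Ω} {T' : ι' → Set Ω} {σ : ι' → ι}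

lemma eq_biUnion_fiber_of_refines [Fintype ι'] [DecidableEq ι]
    (hTdisj : Pairwise (Disjoint on T)) (hT'cov : ⋃ j', T' j' = Set.univ)
    (hσ : ∀ j', T' j' ⊆ T (σ j')) (j : ι) :
    T j = ⋃ j' ∈ Finset.univ.filter (σ · = j), T' j' := by
  ext x
  simp only [Set.mem_iUnion, Finset.mem_filter, Finset.mem_univ, true_and, exists_prop]
  constructor
  · intro hx
    obtain ⟨j', hx'⟩ := Set.mem_iUnion.1 (hT'cov ▸ Set.mem_univ x)
    refine ⟨j', ?_, hx'⟩
    by_contra hne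
    exact Set.disjoint_left.1 (hTdisj hne) (hσ j' hx') hx
  · rintro ⟨j', rfl, hx⟩
    exact hσ j' hx

lemma setIntegral_eq_sum_fiber_of_refines [MeasurableSpace Ω] {μ : Measure Ω}
    [Fintype ι'] [DecidableEq ι] {E : Type*} [NormedAddCommGroup E] [NormedSpace ℝ E]
    {f : Ω → E} (hT'm : ∀ j', MeasurableSet (T' j')) (hTdisj : Pairwise (Disjoint on T))
    (hT'disj : Pairwise (Disjoint on T')) (hT'cov : ⋃ j', T' j' = Set.univ)
    (hσ : ∀ j', T' j' ⊆ T (σ j')) (hf : ∀ j', IntegrableOn f (T' j') μ) (j : ι) :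
    ∫ x in T j, f x ∂μ = ∑ j' ∈ Finset.univ.filter (σ · = j), ∫ x in T' j', f x ∂μ := by
  rw [eq_biUnion_fiber_of_refines hTdisj hT'cov hσ j]
  exact integral_biUnion_finset _ (fun j' _ => hT'm j') (fun _ _ _ _ hne => hT'disj hne)
    fun j' _ => hf j'

theorem sum_sqrt_setIntegral_mul_le_of_refines [MeasurableSpace Ω] {μ : Measure Ω}
    [Fintype ι] [Fintype ι'] {f g : Ω → ℝ} (hf0 : ∀ x, 0 ≤ f x) (hg0 : ∀ x, 0 ≤ g x)
    (hT'm : ∀ j', MeasurableSet (T' j')) (hTdisj : Pairwise (Disjoint on T))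
    (hT'disj : Pairwise (Disjoint on T')) (hT'cov : ⋃ j', T' j' = Set.univ)
    (hrefine : ∀ j', ∃ j, T' j' ⊆ T j)
    (hf : ∀ j', IntegrableOn f (T' j') μ) (hg : ∀ j', IntegrableOn g (T' j') μ) :
    ∑ j', Real.sqrt ((∫ x in T' j', f x ∂μ) * ∫ x in T' j', g x ∂μ)
      ≤ ∑ j, Real.sqrt ((∫ x in T j, f x ∂μ) * ∫ x in T j, g x ∂μ) := by
  classical
  choose σ hσ using hrefine
  rw [← Finset.sum_fiberwise Finset.univ σ]
  refine Finset.sum_le_sum fun j _ => ?_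
  rw [setIntegral_eq_sum_fiber_of_refines hT'm hTdisj hT'disj hT'cov hσ hf,
    setIntegral_eq_sum_fiber_of_refines hT'm hTdisj hT'disj hT'cov hσ hg]
  exact Real.sum_sqrt_mul_le_sqrt_mul_sum _ (fun _ => integral_nonneg hf0)
    fun _ => integral_nonneg hg0

lemma csInf_le_csInf_of_refines {L : (Ω → ℝ) → ℝ} (hL : BddBelow (Set.range L))
    (hrefine : ∀ j', ∃ j, T' j' ⊆ T j) :
    sInf {y | ∃ f : Ω → ℝ, (∀ j', ∀ x ∈ T' j', ∀ x' ∈ T' j', f x = f x') ∧ y = L f}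
      ≤ sInf {y | ∃ f : Ω → ℝ, (∀ j, ∀ x ∈ T j, ∀ x' ∈ T j, f x = f x') ∧ y = L f} := by
  refine csInf_le_csInf (hL.mono ?_) ⟨L 0, 0, fun _ _ _ _ _ => rfl, rfl⟩ ?_
  · rintro _ ⟨f, -, rfl⟩
    exact ⟨f, rfl⟩
  · rintro _ ⟨f, hf, rfl⟩
    refine ⟨f, fun j' x hx x' hx' => ?_, rfl⟩
    obtain ⟨j, hj⟩ := hrefine j'
    exact hf j x (hj hx) x' (hj hx')

end Refinement

/-- Unlike the `[0,∞]`-valued `l(w)`, a non-integrable term counts as `0` here. -/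
noncomputable def balancingLoss {Ω : Type*} [MeasurableSpace Ω] (μ : Measure Ω)
    (p q w : Ω → ℝ) : ℝ :=
  (∫ x, (w x)⁻¹ * p x ∂μ) + ∫ x, w x * q x ∂μ

lemma balancingLoss_nonneg {Ω : Type*} [MeasurableSpace Ω] (μ : Measure Ω) {p q w : Ω → ℝ}
    (hp : ∀ x, 0 ≤ p x) (hq : ∀ x, 0 ≤ q x) (hw : ∀ x, 0 < w x) :
    0 ≤ balancingLoss μ p q w :=
  add_nonneg (integral_nonneg fun x => mul_nonneg (inv_nonneg.2 (hw x).le) (hp x))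
    (integral_nonneg fun x => mul_nonneg (hw x).le (hq x))

theorem stmt_12_general {Ω : Type*} [MeasurableSpace Ω] (μ : Measure Ω)
    (p q : Ω → ℝ)
    (hp0 : ∀ x, 0 ≤ p x) (hq0 : ∀ x, 0 ≤ q x)
    (w₀ : Ω → ℝ) (hw₀ : ∀ x, 0 < w₀ x)
    (m m' : ℕ) (T : Fin m → Set Ω) (T' : Fin m' → Set Ω)
    (hT'm : ∀ j, MeasurableSet (T' j))
    (hTdisj : Pairwise fun i j => Disjoint (T i) (T j))
    (hT'disj : Pairwise fun i j => Disjoint (T' i) (T' j))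
    (hT'cov : ⋃ j, T' j = Set.univ)
    -- T' refines T
    (hrefine : ∀ j', ∃ j, T' j' ⊆ T j)
    (haiT' : ∀ j, IntegrableOn (fun x => (w₀ x)⁻¹ * p x) (T' j) μ)
    (hbiT' : ∀ j, IntegrableOn (fun x => w₀ x * q x) (T' j) μ) :
    (2 * ∑ j', Real.sqrt ((∫ x in T' j', (w₀ x)⁻¹ * p x ∂μ) * ∫ x in T' j', w₀ x * q x ∂μ)
      ≤ 2 * ∑ j, Real.sqrt ((∫ x in T j, (w₀ x)⁻¹ * p x ∂μ) * ∫ x in T j, w₀ x * q x ∂μ)) ∧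
    sInf {y : ℝ | ∃ f : Ω → ℝ, (∀ j', ∀ x ∈ T' j', ∀ x' ∈ T' j', f x = f x') ∧
        y = (∫ x, (w₀ x * Real.exp (f x))⁻¹ * p x ∂μ)
          + ∫ x, (w₀ x * Real.exp (f x)) * q x ∂μ}
      ≤ sInf {y : ℝ | ∃ f : Ω → ℝ, (∀ j, ∀ x ∈ T j, ∀ x' ∈ T j, f x = f x') ∧
        y = (∫ x, (w₀ x * Real.exp (f x))⁻¹ * p x ∂μ)
          + ∫ x, (w₀ x * Real.exp (f x)) * q x ∂μ} := by
  have hloss_bdd : BddBelow (Set.range fun f : Ω → ℝ =>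
      balancingLoss μ p q fun x => w₀ x * Real.exp (f x)) := by
    refine ⟨0, ?_⟩
    rintro _ ⟨f, rfl⟩
    exact balancingLoss_nonneg μ hp0 hq0 fun x => mul_pos (hw₀ x) (Real.exp_pos _)
  refine ⟨?_, csInf_le_csInf_of_refines hloss_bdd hrefine⟩
  gcongr 2 * ?_
  exact sum_sqrt_setIntegral_mul_le_of_refines
    (fun x => mul_nonneg (inv_nonneg.2 (hw₀ x).le) (hp0 x)) (fun x => mul_nonneg (hw₀ x).le (hq0 x))
    hT'm hTdisj hT'disj hT'cov hrefine haiT' hbiT'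

/-- Let `w₀ : Ω → (0,∞)` be measurable, and let `T` and `T'` be finite
measurable partitions of `Ω` such that `T'` refines `T` and every cell `A` of either
partition satisfies `0 < ∫_A w₀⁻¹ p dμ < ∞` and `0 < ∫_A w₀ q dμ < ∞`. Then the
partition-optimal balancing loss is nonincreasing under refinement:
`2 ∑_{A' ∈ T'} √((∫_{A'} w₀⁻¹ p dμ)·(∫_{A'} w₀ q dμ))
  ≤ 2 ∑_{A ∈ T} √((∫_A w₀⁻¹ p dμ)·(∫_A w₀ q dμ))`.
Equivalently, the minimum of the balancing loss over functions of the form `w₀·e^f` with `f`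
piecewise constant on `T'` is at most the corresponding minimum over `f` piecewise constant
on `T`. -/
theorem stmt_12 {Ω : Type*} [MeasurableSpace Ω] (μ : Measure Ω) [SigmaFinite μ]
    (p q : Ω → ℝ) (hpm : Measurable p) (hqm : Measurable q)
    (hp0 : ∀ x, 0 ≤ p x) (hq0 : ∀ x, 0 ≤ q x)
    (hpi : Integrable p μ) (hqi : Integrable q μ)
    (hp1 : ∫ x, p x ∂μ = 1) (hq1 : ∫ x, q x ∂μ = 1)
    (w₀ : Ω → ℝ) (hw₀m : Measurable w₀) (hw₀ : ∀ x, 0 < w₀ x)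
    (m m' : ℕ) (T : Fin m → Set Ω) (T' : Fin m' → Set Ω)
    (hTm : ∀ j, MeasurableSet (T j)) (hT'm : ∀ j, MeasurableSet (T' j))
    (hTdisj : Pairwise fun i j => Disjoint (T i) (T j))
    (hT'disj : Pairwise fun i j => Disjoint (T' i) (T' j))
    (hTcov : ⋃ j, T j = Set.univ) (hT'cov : ⋃ j, T' j = Set.univ)
    -- T' refines T
    (hrefine : ∀ j', ∃ j, T' j' ⊆ T j)
    (haiT : ∀ j, IntegrableOn (fun x => (w₀ x)⁻¹ * p x) (T j) μ)
    (hbiT : ∀ j, IntegrableOn (fun x => w₀ x * q x) (T j) μ)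
    (haT0 : ∀ j, 0 < ∫ x in T j, (w₀ x)⁻¹ * p x ∂μ)
    (hbT0 : ∀ j, 0 < ∫ x in T j, w₀ x * q x ∂μ)
    (haiT' : ∀ j, IntegrableOn (fun x => (w₀ x)⁻¹ * p x) (T' j) μ)
    (hbiT' : ∀ j, IntegrableOn (fun x => w₀ x * q x) (T' j) μ)
    (haT'0 : ∀ j, 0 < ∫ x in T' j, (w₀ x)⁻¹ * p x ∂μ)
    (hbT'0 : ∀ j, 0 < ∫ x in T' j, w₀ x * q x ∂μ) :
    (2 * ∑ j', Real.sqrt ((∫ x in T' j', (w₀ x)⁻¹ * p x ∂μ) * ∫ x in T' j', w₀ x * q x ∂μ)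
      ≤ 2 * ∑ j, Real.sqrt ((∫ x in T j, (w₀ x)⁻¹ * p x ∂μ) * ∫ x in T j, w₀ x * q x ∂μ)) ∧
    sInf {y : ℝ | ∃ f : Ω → ℝ, (∀ j', ∀ x ∈ T' j', ∀ x' ∈ T' j', f x = f x') ∧
        y = (∫ x, (w₀ x * Real.exp (f x))⁻¹ * p x ∂μ)
          + ∫ x, (w₀ x * Real.exp (f x)) * q x ∂μ}
      ≤ sInf {y : ℝ | ∃ f : Ω → ℝ, (∀ j, ∀ x ∈ T j, ∀ x' ∈ T j, f x = f x') ∧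
        y = (∫ x, (w₀ x * Real.exp (f x))⁻¹ * p x ∂μ)
          + ∫ x, (w₀ x * Real.exp (f x)) * q x ∂μ} :=
  stmt_12_general μ p q hp0 hq0 w₀ hw₀ m m' T T' hT'm hTdisj hT'disj hT'cov hrefine haiT' hbiT'
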